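/- On the dyadic group G = ∏_{j=0}^∞ ℤ/2ℤ, for x with x_0 = x_1 = 1 and integers α ≥ 2 and j with 2^{2α} ≤ j ≤ 2^{2α+1}−1, the absolute value of ∑_{n=2^{2α-1}}^{(j-1)/2} w_{2n}(x)/(2n+1) is at least 1/j − ∑_{n=2^{2α-2}+1}^{⌊(j-1)/4⌋} (1/(4n-3) − 1/(4n-1)), provided j is odd with j ≡ 5 (mod 8) (so that the pairing w_{4n-2}(x) = −w_{4n-4}(x) applies and the last term is isolated). -/

import Mathlib

/-!
Walsh functions multiply under concatenation of binary digits, so `x₁ = 1` gives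
`w_{4m+2}(x) = w_2(x) w_{4m}(x) = -w_{4m}(x)`. Grouping the sum in consecutive pairs
`n = 2m, 2m + 1`, each pair equals `w_{4m}(x) (1/(4m+1) - 1/(4m+3))`, of absolute value
`1/(4m+1) - 1/(4m+3)`; since `j ≡ 5 (mod 8)` the top index `n = (j-1)/2` is even and is left
over as a single term of absolute value `1/j`. The reverse triangle inequality finishes.
-/

open Finset

/-- The `m`-th Walsh function on the dyadic group `G = ∏_{j} ℤ/2ℤ`:
`w_m(x) = (-1)^(∑_k m_k x_k)` where `m_k` are the binary digits of `m`. -/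
noncomputable def walsh (m : ℕ) (x : ℕ → ZMod 2) : ℝ :=
  (-1 : ℝ) ^ (∑ k ∈ Finset.range m, if m.testBit k then (x k).val else 0)

/-- The `m`-th Walsh–Dirichlet kernel `D_m = ∑_{v=0}^{m-1} w_v`. -/
noncomputable def walshDirichlet (m : ℕ) (x : ℕ → ZMod 2) : ℝ :=
  ∑ v ∈ Finset.range m, walsh v x

theorem Finset.sum_Ico_two_mul {M : Type*} [AddCommMonoid M] (f : ℕ → M) (a b : ℕ) :
    ∑ n ∈ Ico (2 * a) (2 * b), f n = ∑ m ∈ Ico a b, (f (2 * m) + f (2 * m + 1)) := by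
  rcases le_or_gt a b with hab | hba
  · induction b, hab using Nat.le_induction with
    | base => simp
    | succ b hab ih =>
      rw [mul_add_one, show 2 * b + 2 = 2 * b + 1 + 1 from rfl, sum_Ico_succ_top (by omega),
        sum_Ico_succ_top (by omega), ih, sum_Ico_succ_top hab, add_assoc]
  · simp [Ico_eq_empty_of_le, hba.le]

section Walsh

variable (x : ℕ → ZMod 2)

theorem abs_walsh (m : ℕ) : |walsh m x| = 1 := by
  rw [walsh, abs_pow, abs_neg, abs_one, one_pow]

theorem walsh_eq_neg_one_pow_sum_range {m N : ℕ} (h : m ≤ N) :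
    walsh m x = (-1) ^ (∑ k ∈ range N, if m.testBit k then (x k).val else 0) := by
  rw [walsh, sum_subset (range_subset_range.2 h)]
  intro k _ hk
  have hm : m < 2 ^ k := (not_lt.1 (mem_range.not.1 hk)).trans_lt k.lt_two_pow_self
  simp [Nat.testBit_lt_two_pow hm]

/-- The binary digits of `2 ^ i * a` and of `b < 2 ^ i` are disjoint, so the digit sums add. -/
theorem walsh_two_pow_mul_add (a : ℕ) {i b : ℕ} (hb : b < 2 ^ i) :
    walsh (2 ^ i * a + b) x = walsh (2 ^ i * a) x * walsh b x := by
  rw [walsh_eq_neg_one_pow_sum_range x le_rfl,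
    walsh_eq_neg_one_pow_sum_range x (Nat.le_add_right _ b),
    walsh_eq_neg_one_pow_sum_range x (Nat.le_add_left b _), ← pow_add, ← sum_add_distrib]
  congr 1
  refine sum_congr rfl fun k _ => ?_
  have hsum := Nat.testBit_two_pow_mul_add a hb k
  have hhigh : (2 ^ i * a).testBit k = if k < i then false else a.testBit (k - i) := by
    simpa using Nat.testBit_two_pow_mul_add a (Nat.two_pow_pos i) k
  rcases lt_or_ge k i with hk | hk
  · simp [hsum, hhigh, hk]
  · have hbk : b.testBit k = false :=
      Nat.testBit_lt_two_pow (hb.trans_le (Nat.pow_le_pow_right two_pos hk))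
    simp [hsum, hhigh, hbk, not_lt.2 hk]

theorem walsh_two (hx1 : x 1 = 1) : walsh 2 x = -1 := by
  have h0 : Nat.testBit 2 0 = false := rfl
  have h1 : Nat.testBit 2 1 = true := rfl
  simp [walsh, sum_range_succ, h0, h1, hx1, ZMod.val_one]

theorem walsh_four_mul_add_two (hx1 : x 1 = 1) (m : ℕ) :
    walsh (4 * m + 2) x = -walsh (4 * m) x := by
  have h := walsh_two_pow_mul_add x m (i := 2) (b := 2) (by norm_num)
  norm_num at h
  rw [h, walsh_two x hx1, mul_neg_one]

theorem walsh_div_pair_eq (hx1 : x 1 = 1) (m : ℕ) :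
    walsh (2 * (2 * m)) x / (2 * ((2 * m : ℕ) : ℝ) + 1)
        + walsh (2 * (2 * m + 1)) x / (2 * ((2 * m + 1 : ℕ) : ℝ) + 1)
      = walsh (4 * m) x * (1 / (4 * m + 1) - 1 / (4 * m + 3)) := by
  rw [show 2 * (2 * m + 1) = 4 * m + 2 by ring, walsh_four_mul_add_two x hx1, ← mul_assoc]
  push_cast
  ring

theorem abs_sum_Ico_walsh_div_le (hx1 : x 1 = 1) (a b : ℕ) :
    |∑ n ∈ Ico (2 * a) (2 * b), walsh (2 * n) x / (2 * (n : ℝ) + 1)|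
      ≤ ∑ n ∈ Ico (a + 1) (b + 1), (1 / (4 * (n : ℝ) - 3) - 1 / (4 * (n : ℝ) - 1)) := by
  rw [sum_Ico_two_mul, ← sum_Ico_add']
  refine (abs_sum_le_sum_abs _ _).trans (sum_le_sum fun m _ => ?_)
  have hpos : 0 ≤ 1 / (4 * (m : ℝ) + 1) - 1 / (4 * m + 3) :=
    sub_nonneg.2 (one_div_le_one_div_of_le (by positivity) (by linarith))
  rw [walsh_div_pair_eq x hx1, abs_mul, abs_walsh, one_mul, abs_of_nonneg hpos]
  push_cast
  exact le_of_eq (by ring)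

end Walsh

theorem stmt_16_general (x : ℕ → ZMod 2) (hx1 : x 1 = 1)
    (α j : ℕ) (hα : 2 ≤ α) (hj1 : 2 ^ (2 * α) ≤ j)
    (hj5 : j % 8 = 5) :
    (1 : ℝ) / j
        - ∑ n ∈ Finset.Icc (2 ^ (2 * α - 2) + 1) ((j - 1) / 4),
            ((1 : ℝ) / (4 * (n : ℝ) - 3) - 1 / (4 * (n : ℝ) - 1))
      ≤ |∑ n ∈ Finset.Icc (2 ^ (2 * α - 1)) ((j - 1) / 2),
            walsh (2 * n) x / (2 * (n : ℝ) + 1)| := by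
  obtain ⟨K, rfl⟩ : ∃ K, j = 8 * K + 5 := ⟨j / 8, by omega⟩
  set b := 2 ^ (2 * α - 2)
  have h2b : 2 ^ (2 * α - 1) = 2 * b := by rw [← pow_succ']; congr 1; omega
  have h4b : 2 ^ (2 * α) = 4 * b := by rw [show 4 = 2 ^ 2 from rfl, ← pow_add]; congr 1; omega
  set f : ℕ → ℝ := fun n => walsh (2 * n) x / (2 * (n : ℝ) + 1)
  have hsplit : ∑ n ∈ Icc (2 * b) (4 * K + 2), f n
      = ∑ n ∈ Ico (2 * b) (2 * (2 * K + 1)), f n + f (4 * K + 2) := by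
    rw [← Ico_add_one_right_eq_Icc, sum_Ico_succ_top (by omega),
      show 2 * (2 * K + 1) = 4 * K + 2 by ring]
  have hlast : |f (4 * K + 2)| = 1 / ((8 * K + 5 : ℕ) : ℝ) := by
    rw [abs_div, abs_walsh, abs_of_pos (by positivity)]
    push_cast
    ring
  rw [h2b, show (8 * K + 5 - 1) / 2 = 4 * K + 2 by omega,
    show (8 * K + 5 - 1) / 4 = 2 * K + 1 by omega, ← Ico_add_one_right_eq_Icc, hsplit]
  have hpairs := abs_sum_Ico_walsh_div_le x hx1 b (2 * K + 1)
  have := abs_add' (f (4 * K + 2)) (∑ n ∈ Ico (2 * b) (2 * (2 * K + 1)), f n)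
  linarith

/-- For `x` with `x_0 = x_1 = 1`, `α ≥ 2` and `2^{2α} ≤ j ≤ 2^{2α+1}-1`
with `j ≡ 5 (mod 8)`, the absolute value of `∑_{n=2^{2α-1}}^{(j-1)/2} w_{2n}(x)/(2n+1)`
is at least `1/j − ∑_{n=2^{2α-2}+1}^{⌊(j-1)/4⌋} (1/(4n-3) − 1/(4n-1))`. -/
theorem stmt_16 (x : ℕ → ZMod 2) (hx0 : x 0 = 1) (hx1 : x 1 = 1)
    (α j : ℕ) (hα : 2 ≤ α) (hj1 : 2 ^ (2 * α) ≤ j) (hj2 : j ≤ 2 ^ (2 * α + 1) - 1)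
    (hj5 : j % 8 = 5) :
    (1 : ℝ) / j
        - ∑ n ∈ Finset.Icc (2 ^ (2 * α - 2) + 1) ((j - 1) / 4),
            ((1 : ℝ) / (4 * (n : ℝ) - 3) - 1 / (4 * (n : ℝ) - 1))
      ≤ |∑ n ∈ Finset.Icc (2 ^ (2 * α - 1)) ((j - 1) / 2),
            walsh (2 * n) x / (2 * (n : ℝ) + 1)| :=
  stmt_16_general x hx1 α j hα hj1 hj5
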